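/- arXiv:2407.11783 — 2 statements merged into one kernel-verified Lean document; each statement's English description precedes it below -/
import Mathlib

section
/- Let F : 𝔽₂ⁿ → 𝔽₂ⁿ be an APN function. Then for every (a, b) ∈ 𝔽₂ⁿ × 𝔽₂ⁿ with b ≠ F(a), one has 3 · 2^{2n+1} · d_{G_F}(a, b) = ∑_{(u,v) ∈ 𝔽₂ⁿ × 𝔽₂ⁿ} (−1)^{v·b + u·a} · W_F(u,v)³. -/
/-- The vector space `𝔽₂ⁿ`. -/
abbrev V (n : ℕ) := Fin n → ZMod 2

/-- The standard inner product on `𝔽₂ⁿ`, valued in `𝔽₂`. -/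
def ip {n : ℕ} (x y : V n) : ZMod 2 := ∑ i, x i * y i

/-- `F` is almost perfect nonlinear: for `a ≠ 0`, `F (x + a) + F x = b` has at most 2
solutions. -/
def IsAPN {G : Type*} [AddCommGroup G] [Fintype G] [DecidableEq G] (F : G → G) : Prop :=
  ∀ a b : G, a ≠ 0 → (Finset.univ.filter (fun x => F (x + a) + F x = b)).card ≤ 2

/-- The Walsh transform `W_F(u, v) = ∑_x (−1)^(v·F(x) + u·x)`. -/
def walsh {n : ℕ} (F : V n → V n) (u v : V n) : ℤ :=
  ∑ x : V n, (-1 : ℤ) ^ (ip v (F x) + ip u x).val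

/-- The graph `G_F = {(x, F(x)) : x ∈ 𝔽₂ⁿ}` of `F`, as a finite set. -/
def graphF {n : ℕ} (F : V n → V n) : Finset (V n × V n) :=
  Finset.univ.image (fun x => (x, F x))

/-- The exclude multiplicity of `y` w.r.t. `S`: the number of 3-element subsets of `S`
whose elements sum to `y`. -/
def excMult {G : Type*} [AddCommGroup G] [DecidableEq G] (S : Finset G) (y : G) : ℕ :=
  ((S.powersetCard 3).filter (fun T => T.sum id = y)).card

/-! Expanding `W_F(u, v)³` as a sum over ordered triples `(x, y, z)` and summing the characters
over `(u, v)` leaves `2^{2n}` times the number of triples with `x + y + z = a` and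
`F x + F y + F z = b`. Since `(a, b) ∉ G_F`, no two entries of such a triple coincide (otherwise
they cancel and the third is `a` with `F a = b`), so the triples are exactly the `3! = 6`
orderings of the 3-subsets of `G_F` summing to `(a, b)`. -/

open Finset Function
open scoped Nat

lemma neg_one_pow_val_add (s t : ZMod 2) :
    (-1 : ℤ) ^ (s + t).val = (-1) ^ s.val * (-1) ^ t.val := by
  rw [ZMod.val_add, ← neg_one_pow_eq_pow_mod_two, pow_add]

lemma neg_one_pow_val_sum {ι : Type*} (s : Finset ι) (f : ι → ZMod 2) :
    (-1 : ℤ) ^ (∑ i ∈ s, f i).val = ∏ i ∈ s, (-1 : ℤ) ^ (f i).val := by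
  induction s using Finset.cons_induction with
  | empty => simp
  | cons j s hj ih => rw [sum_cons, prod_cons, neg_one_pow_val_add, ih]

lemma ip_add_right {n : ℕ} (u x y : V n) : ip u (x + y) = ip u x + ip u y :=
  dotProduct_add u x y

lemma ip_sum_right {n : ℕ} {ι : Type*} (u : V n) (s : Finset ι) (x : ι → V n) :
    ip u (∑ i ∈ s, x i) = ∑ i ∈ s, ip u (x i) :=
  dotProduct_sum u s x

lemma sum_neg_one_pow_ip {n : ℕ} (c : V n) :
    ∑ u : V n, (-1 : ℤ) ^ (ip u c).val = if c = 0 then 2 ^ n else 0 := by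
  have coord (d : ZMod 2) :
      ∑ s : ZMod 2, (-1 : ℤ) ^ (s * d).val = if d = 0 then 2 else 0 := by
    revert d; decide
  calc ∑ u : V n, (-1 : ℤ) ^ (ip u c).val
      = ∑ u : V n, ∏ i, (-1 : ℤ) ^ (u i * c i).val := by simp only [ip, neg_one_pow_val_sum]
    _ = ∏ i, ∑ s : ZMod 2, (-1 : ℤ) ^ (s * c i).val :=
      (Fintype.prod_sum fun i (s : ZMod 2) => (-1 : ℤ) ^ (s * c i).val).symm
    _ = if c = 0 then 2 ^ n else 0 := by
      simp only [coord, prod_ite_zero, prod_const, card_univ, Fintype.card_fin, mem_univ,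
        true_implies, funext_iff, Pi.zero_apply]

lemma walsh_pow {n : ℕ} (F : V n → V n) (u v : V n) (k : ℕ) :
    walsh F u v ^ k =
      ∑ t : Fin k → V n, (-1 : ℤ) ^ (∑ i, (ip v (F (t i)) + ip u (t i))).val := by
  rw [← Fin.prod_const, walsh, Fintype.prod_sum]
  simp only [neg_one_pow_val_sum]

theorem sum_neg_one_pow_mul_walsh_pow {n : ℕ} (F : V n → V n) (a b : V n) (k : ℕ) :
    ∑ u : V n, ∑ v : V n, (-1 : ℤ) ^ (ip v b + ip u a).val * walsh F u v ^ k =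
      2 ^ (2 * n) * #{t : Fin k → V n | ∑ i, t i = a ∧ ∑ i, F (t i) = b} := by
  have phase (u v : V n) (t : Fin k → V n) :
      (-1 : ℤ) ^ (ip v b + ip u a).val * (-1) ^ (∑ i, (ip v (F (t i)) + ip u (t i))).val =
        (-1) ^ (ip u (a + ∑ i, t i)).val * (-1) ^ (ip v (b + ∑ i, F (t i))).val := by
    rw [← neg_one_pow_val_add, ← neg_one_pow_val_add, ip_add_right, ip_add_right,
      ip_sum_right, ip_sum_right, sum_add_distrib]
    congr 2
    ring
  have delta (x y : V n) : x + y = 0 ↔ y = x := by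
    rw [← ZModModule.sub_eq_add, sub_eq_zero, eq_comm]
  calc ∑ u : V n, ∑ v : V n, (-1 : ℤ) ^ (ip v b + ip u a).val * walsh F u v ^ k
      = ∑ t : Fin k → V n, (∑ u : V n, (-1 : ℤ) ^ (ip u (a + ∑ i, t i)).val) *
          ∑ v : V n, (-1 : ℤ) ^ (ip v (b + ∑ i, F (t i))).val := by
        simp only [sum_mul_sum]
        rw [← sum_comm_cycle]
        simp only [walsh_pow, mul_sum, phase]
    _ = ∑ t : Fin k → V n, if ∑ i, t i = a ∧ ∑ i, F (t i) = b then 2 ^ (2 * n) else 0 := by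
        simp only [sum_neg_one_pow_ip, delta, ite_zero_mul_ite_zero, ← pow_add, two_mul]
    _ = 2 ^ (2 * n) * #{t : Fin k → V n | ∑ i, t i = a ∧ ∑ i, F (t i) = b} := by
        rw [← sum_filter, sum_const, nsmul_eq_mul, mul_comm]

section Counting

variable {α : Type*} [Fintype α] [DecidableEq α] {k : ℕ}

lemma card_filter_injective_image_eq {T : Finset α} (hT : #T = k) :
    #{f : Fin k → α | Injective f ∧ univ.image f = T} = k ! := by
  have hcard : Fintype.card (Fin k) = Fintype.card T := by simp [hT]
  suffices #(univ : Finset (Fin k ≃ T)) = #{f : Fin k → α | Injective f ∧ univ.image f = T} by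
    rw [← this, card_univ, Fintype.card_equiv (Fintype.equivOfCardEq hcard), Fintype.card_fin]
  refine card_bij (fun e _ j => (e j : α)) ?_ ?_ ?_
  · intro e _
    refine mem_filter.2 ⟨mem_univ _, Subtype.val_injective.comp e.injective, ?_⟩
    ext x
    simp only [mem_image, mem_univ, true_and]
    exact ⟨fun ⟨j, hj⟩ => hj ▸ (e j).2, fun hx => ⟨e.symm ⟨x, hx⟩, by simp⟩⟩
  · intro e₁ _ e₂ _ h
    exact Equiv.ext fun j => Subtype.ext (congrFun h j)
  · intro f hf
    obtain ⟨hinj, himage⟩ := (mem_filter.1 hf).2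
    have hmem (j : Fin k) : f j ∈ T := himage ▸ mem_image_of_mem f (mem_univ j)
    have hbij : Bijective fun j => (⟨f j, hmem j⟩ : T) :=
      (Fintype.bijective_iff_injective_and_card _).2
        ⟨fun i j h => hinj (congrArg Subtype.val h), hcard⟩
    exact ⟨Equiv.ofBijective _ hbij, mem_univ _, rfl⟩

lemma card_filter_injective_image_mem (𝒜 : Finset (Finset α)) (h𝒜 : ∀ T ∈ 𝒜, #T = k) :
    #{f : Fin k → α | Injective f ∧ univ.image f ∈ 𝒜} = k ! * #𝒜 := by
  rw [card_eq_sum_card_fiberwise (f := fun f => univ.image f) (t := 𝒜)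
    fun f hf => (mem_filter.1 hf).2.2, mul_comm, ← smul_eq_mul, ← sum_const]
  refine sum_congr rfl fun T hT => ?_
  rw [← card_filter_injective_image_eq (h𝒜 T hT), filter_filter]
  congr 1
  ext f
  simp only [mem_filter, mem_univ, true_and]
  constructor
  · rintro ⟨⟨hf, -⟩, rfl⟩; exact ⟨hf, rfl⟩
  · rintro ⟨hf, rfl⟩; exact ⟨⟨hf, hT⟩, rfl⟩

end Counting

section ElementaryAbelian

variable {G : Type*} [AddCommGroup G] [Module (ZMod 2) G]

lemma injective_of_sum_fin_three_notMem {S : Finset G} {y : G} (hy : y ∉ S) {f : Fin 3 → G}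
    (hS : ∀ i, f i ∈ S) (hsum : ∑ i, f i = y) : Injective f := by
  have h₁ (x z : G) : x + x + z = z := by rw [ZModModule.add_self, zero_add]
  have h₂ (x z : G) : x + z + x = z := by rw [add_right_comm, h₁]
  have h₃ (x z : G) : z + x + x = z := by rw [add_assoc, ZModModule.add_self, add_zero]
  rw [Fin.sum_univ_three] at hsum
  intro i j hij
  fin_cases i <;> fin_cases j <;> first
    | rfl
    | (simp only [Fin.zero_eta, Fin.mk_one, Fin.reduceFinMk] at hij
       simp only [hij, h₁, h₂, h₃] at hsum
       exact absurd (hsum ▸ hS _) hy)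

lemma card_sum_fin_three_eq_six_mul_excMult [Fintype G] [DecidableEq G] {S : Finset G} {y : G}
    (hy : y ∉ S) : #{f : Fin 3 → G | (∀ i, f i ∈ S) ∧ ∑ i, f i = y} = 6 * excMult S y := by
  rw [excMult, show 6 = 3 ! from rfl, ← card_filter_injective_image_mem (k := 3) _
    fun T hT => (mem_powersetCard.1 (mem_filter.1 hT).1).2]
  congr 1
  ext f
  simp only [mem_filter, mem_univ, true_and, mem_powersetCard, image_subset_iff, forall_const]
  constructor
  · rintro ⟨hS, hsum⟩
    have hf := injective_of_sum_fin_three_notMem hy hS hsum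
    exact ⟨hf, ⟨hS, by rw [card_image_of_injective _ hf, card_univ, Fintype.card_fin]⟩,
      by rwa [sum_image hf.injOn]⟩
  · rintro ⟨hf, ⟨hS, -⟩, hsum⟩
    exact ⟨hS, by rwa [sum_image hf.injOn] at hsum⟩

end ElementaryAbelian

lemma mem_graphF {n : ℕ} {F : V n → V n} {p : V n × V n} : p ∈ graphF F ↔ p.2 = F p.1 := by
  simp [graphF, Prod.ext_iff, eq_comm]

lemma card_sum_eq_card_sum_graphF {n : ℕ} (F : V n → V n) (a b : V n) (k : ℕ) :
    #{t : Fin k → V n | ∑ i, t i = a ∧ ∑ i, F (t i) = b} =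
      #{f : Fin k → V n × V n | (∀ i, f i ∈ graphF F) ∧ ∑ i, f i = (a, b)} := by
  refine card_nbij' (fun t i => (t i, F (t i))) (fun f i => (f i).1) ?_ ?_ ?_ ?_
  · intro t ht
    simp_all [mem_graphF, Prod.ext_iff, Prod.fst_sum, Prod.snd_sum]
  · intro f hf
    simp only [coe_filter, Set.mem_ofPred_eq, mem_univ, true_and, mem_graphF, Prod.ext_iff,
      Prod.fst_sum, Prod.snd_sum] at hf ⊢
    obtain ⟨hgraph, hfst, hsnd⟩ := hf
    exact ⟨hfst, hsnd ▸ sum_congr rfl fun i _ => (hgraph i).symm⟩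
  · exact fun _ _ => rfl
  · intro f hf
    funext i
    exact Prod.ext rfl ((mem_graphF.1 ((mem_filter.1 hf).2.1 i)).symm)

theorem excMult_graph_eq_walsh_cube_sum_general (n : ℕ) (F : V n → V n)
    (a b : V n) (hb : b ≠ F a) :
    3 * 2 ^ (2 * n + 1) * (excMult (graphF F) (a, b) : ℤ) =
      ∑ u : V n, ∑ v : V n, (-1 : ℤ) ^ (ip v b + ip u a).val * walsh F u v ^ 3 := by
  have hab : (a, b) ∉ graphF F := fun h => hb (mem_graphF.1 h)
  rw [sum_neg_one_pow_mul_walsh_pow, card_sum_eq_card_sum_graphF,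
    card_sum_fin_three_eq_six_mul_excMult hab]
  push_cast
  ring

/-- For an APN function `F : 𝔽₂ⁿ → 𝔽₂ⁿ` and any `(a, b)` with `b ≠ F a`,
`3 · 2^{2n+1} · d_{G_F}(a, b) = ∑_{(u,v)} (−1)^(v·b + u·a) W_F(u,v)³`. -/
theorem excMult_graph_eq_walsh_cube_sum (n : ℕ) (F : V n → V n) (hF : IsAPN F)
    (a b : V n) (hb : b ≠ F a) :
    3 * 2 ^ (2 * n + 1) * (excMult (graphF F) (a, b) : ℤ) =
      ∑ u : V n, ∑ v : V n, (-1 : ℤ) ^ (ip v b + ip u a).val * walsh F u v ^ 3 :=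
  excMult_graph_eq_walsh_cube_sum_general n F a b hb
end

section
/- Let F : 𝔽₂ⁿ → 𝔽₂ⁿ be an APN function. If F is plateaued and every component function of F is unbalanced, then for all a, α, b ∈ 𝔽₂ⁿ with b ≠ F(a) one has d_{G_F}(a, b) = d_{G_F}(α, b + F(a) + F(α)); in particular, the exclude distribution of G_F is uniform on the partition {Q_a(F) : a ∈ 𝔽₂ⁿ} of (𝔽₂ⁿ × 𝔽₂ⁿ) ∖ G_F, where Q_a(F) = {a} × (𝔽₂ⁿ ∖ {F(a)}). -/
/-!
Let `N(a, b)` be the number of ordered triples `(x, y, z)` with `x + y + z = a` and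
`F x + F y + F z = b`. Orthogonality of characters gives
`2^(2n) N(a, b) = ∑_{u,v} W_F(u, v)³ (-1)^(u·a + v·b)`. For plateaued `F` we have
`W_F(u, v)³ = λ_v² W_F(u, v)`, and Walsh inversion turns the sum into
`2^n ∑_v λ_v² (-1)^(v·(F a + b))`, so `N(a, b)` depends only on `F a + b`, which is the same
for `(a, b)` and `(α, b + F a + F α)`.

Off the graph the three points of a solution are distinct: in characteristic 2 a repeated
point would make the sum equal to the third point, which lies on the graph. Hence
`N(a, b) = 6 d_{G_F}(a, b)`.
-/

open Finset

section DistinctTriples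

variable {α : Type*} [DecidableEq α]

def distinctTriples (s : Finset α) : Finset (α × α × α) :=
  {t ∈ s ×ˢ s ×ˢ s | t.1 ≠ t.2.1 ∧ t.1 ≠ t.2.2 ∧ t.2.1 ≠ t.2.2}

lemma card_distinctTriples {s : Finset α} (hs : #s = 3) : #(distinctTriples s) = 6 := by
  have hfiber : ∀ p ∈ s,
      #{qr ∈ s ×ˢ s | p ≠ qr.1 ∧ p ≠ qr.2 ∧ qr.1 ≠ qr.2} = #(s.erase p).offDiag := by
    intro p _
    congr 1
    ext ⟨q, r⟩
    simp only [mem_filter, mem_product, mem_offDiag, mem_erase]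
    tauto
  rw [distinctTriples, card_filter, sum_product]
  simp_rw [← card_filter]
  rw [sum_congr rfl hfiber, sum_congr rfl fun p hp => by
    rw [offDiag_card, card_erase_of_mem hp, hs]]
  simp [hs]

lemma card_triple {a b c : α} (hab : a ≠ b) (hac : a ≠ c) (hbc : b ≠ c) :
    #({a, b, c} : Finset α) = 3 :=
  card_eq_three.mpr ⟨a, b, c, hab, hac, hbc, rfl⟩

lemma sum_triple {G : Type*} [AddCommMonoid G] [DecidableEq G] {a b c : G}
    (hab : a ≠ b) (hac : a ≠ c) (hbc : b ≠ c) :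
    ({a, b, c} : Finset G).sum id = a + b + c := by
  rw [sum_insert (by simp [hab, hac]), sum_pair hbc, add_assoc]
  rfl

end DistinctTriples

section Exclude

variable {G : Type*} [AddCommGroup G] [DecidableEq G]

lemma card_filter_distinctTriples_sum_eq (s : Finset G) (y : G) :
    #{t ∈ distinctTriples s | t.1 + t.2.1 + t.2.2 = y} = 6 * excMult s y := by
  set image : G × G × G → Finset G := fun t => {t.1, t.2.1, t.2.2}
  set sols : Finset (G × G × G) := {t ∈ distinctTriples s | t.1 + t.2.1 + t.2.2 = y}
  set targets : Finset (Finset G) := {T ∈ s.powersetCard 3 | T.sum id = y}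
  have hmaps : Set.MapsTo image sols targets := by
    rintro ⟨p, q, r⟩ ht
    simp only [sols, distinctTriples, mem_coe, mem_filter, mem_product] at ht
    obtain ⟨⟨⟨hp, hq, hr⟩, hpq, hpr, hqr⟩, hsum⟩ := ht
    simp only [image, targets, mem_coe, mem_filter, mem_powersetCard]
    refine ⟨⟨?_, card_triple hpq hpr hqr⟩, (sum_triple hpq hpr hqr).trans hsum⟩
    simp [insert_subset_iff, hp, hq, hr]
  have hfiber : ∀ T ∈ targets, {t ∈ sols | image t = T} = distinctTriples T := by
    intro T hT
    obtain ⟨hTs, hT3⟩ := mem_powersetCard.mp (mem_filter.mp hT).1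
    ext ⟨p, q, r⟩
    simp only [image, sols, distinctTriples, mem_filter, mem_product]
    constructor
    · rintro ⟨⟨⟨-, hdistinct⟩, -⟩, rfl⟩
      exact ⟨⟨by simp, by simp, by simp⟩, hdistinct⟩
    · rintro ⟨⟨hp, hq, hr⟩, hpq, hpr, hqr⟩
      have himage : {p, q, r} = T := eq_of_subset_of_card_le
        (by simp [insert_subset_iff, hp, hq, hr]) (by rw [hT3, card_triple hpq hpr hqr])
      refine ⟨⟨⟨⟨hTs hp, hTs hq, hTs hr⟩, hpq, hpr, hqr⟩, ?_⟩, himage⟩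
      rw [← sum_triple hpq hpr hqr, himage, (mem_filter.mp hT).2]
  rw [card_eq_sum_card_fiberwise hmaps, sum_congr rfl fun T hT => by
    rw [hfiber T hT, card_distinctTriples (mem_powersetCard.mp (mem_filter.mp hT).1).2]]
  rw [sum_const, smul_eq_mul, mul_comm]
  rfl

lemma card_filter_sum_eq_six_mul_excMult [Module (ZMod 2) G] {s : Finset G} {y : G}
    (hy : y ∉ s) : #{t ∈ s ×ˢ s ×ˢ s | t.1 + t.2.1 + t.2.2 = y} = 6 * excMult s y := by
  rw [← card_filter_distinctTriples_sum_eq, distinctTriples, filter_filter]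
  congr 1
  refine filter_congr fun ⟨p, q, r⟩ hmem => ?_
  simp only [mem_product] at hmem
  obtain ⟨hp, hq, hr⟩ := hmem
  constructor
  · rintro rfl
    dsimp only at hy ⊢
    refine ⟨⟨?_, ?_, ?_⟩, rfl⟩ <;> rintro rfl
    · rw [ZModModule.add_self, zero_add] at hy; exact hy hr
    · rw [add_right_comm, ZModModule.add_self, zero_add] at hy; exact hy hq
    · rw [add_assoc, ZModModule.add_self, add_zero] at hy; exact hy hp
  · exact And.right

end Exclude

section Graph

variable {n : ℕ}

def tripleCount (F : V n → V n) (a b : V n) : ℕ :=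
  #{t : V n × V n × V n | t.1 + t.2.1 + t.2.2 = a ∧ F t.1 + F t.2.1 + F t.2.2 = b}

lemma tripleCount_eq_card_graphF (F : V n → V n) (a b : V n) :
    tripleCount F a b =
      #{t ∈ graphF F ×ˢ graphF F ×ˢ graphF F | t.1 + t.2.1 + t.2.2 = (a, b)} := by
  set lift : V n × V n × V n → (V n × V n) × (V n × V n) × (V n × V n) :=
    fun t => ((t.1, F t.1), (t.2.1, F t.2.1), (t.2.2, F t.2.2))
  have hlift : Function.Injective lift := by
    rintro ⟨x, y, z⟩ ⟨x', y', z'⟩ h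
    simp_all [lift]
  have hgraph : graphF F ×ˢ graphF F ×ˢ graphF F = univ.image lift := by
    ext ⟨⟨x₁, y₁⟩, ⟨x₂, y₂⟩, ⟨x₃, y₃⟩⟩
    simp [graphF, lift, Prod.ext_iff, eq_comm]
  rw [hgraph, filter_image, card_image_of_injective _ hlift]
  simp [tripleCount, lift, Prod.ext_iff]

lemma six_mul_excMult_graphF (F : V n → V n) {a b : V n} (hb : b ≠ F a) :
    6 * excMult (graphF F) (a, b) = tripleCount F a b := by
  rw [tripleCount_eq_card_graphF, card_filter_sum_eq_six_mul_excMult]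
  simp [graphF, Ne.symm hb]

end Graph

def chi (s : ZMod 2) : ℤ := (-1) ^ s.val

lemma chi_add : ∀ s t : ZMod 2, chi (s + t) = chi s * chi t := by decide

lemma chi_one : chi 1 = -1 := rfl

section Fourier

variable {n : ℕ}

lemma walsh_eq_sum (F : V n → V n) (u v : V n) :
    walsh F u v = ∑ x, chi (v ⬝ᵥ F x) * chi (u ⬝ᵥ x) :=
  sum_congr rfl fun _ _ => chi_add _ _

lemma sum_chi_dotProduct (c : V n) :
    ∑ u : V n, chi (u ⬝ᵥ c) = if c = 0 then 2 ^ n else 0 := by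
  split_ifs with hc
  · simp [hc, chi]
  · obtain ⟨i, hi⟩ : ∃ i, c i ≠ 0 := by
      by_contra! h
      exact hc (funext h)
    have hci : c i = 1 := (by decide : ∀ s : ZMod 2, s ≠ 0 → s = 1) _ hi
    have hflip :
        ∑ u : V n, chi ((u + Pi.single i 1) ⬝ᵥ c) = -∑ u : V n, chi (u ⬝ᵥ c) := by
      rw [← sum_neg_distrib]
      refine sum_congr rfl fun u _ => ?_
      rw [add_dotProduct, single_dotProduct, hci, one_mul, chi_add, chi_one, mul_neg_one]
    have hshift := Fintype.sum_equiv (Equiv.addRight (Pi.single i 1 : V n))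
      (fun u => chi ((u + Pi.single i 1) ⬝ᵥ c)) (fun u => chi (u ⬝ᵥ c)) fun _ => by simp
    linarith

lemma sum_walsh_mul_chi (F : V n → V n) (v a : V n) :
    ∑ u, walsh F u v * chi (u ⬝ᵥ a) = 2 ^ n * chi (v ⬝ᵥ F a) := by
  calc ∑ u, walsh F u v * chi (u ⬝ᵥ a)
      = ∑ x, chi (v ⬝ᵥ F x) * ∑ u : V n, chi (u ⬝ᵥ (x + a)) := by
        simp only [walsh_eq_sum, sum_mul, mul_sum, dotProduct_add, chi_add]
        rw [sum_comm]
        refine sum_congr rfl fun x _ => sum_congr rfl fun u _ => by ring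
    _ = ∑ x, chi (v ⬝ᵥ F x) * if x = a then 2 ^ n else 0 := by
        simp only [sum_chi_dotProduct, add_eq_zero_iff_eq_neg, ZModModule.neg_eq_self]
    _ = 2 ^ n * chi (v ⬝ᵥ F a) := by
        rw [Fintype.sum_eq_single a fun _ hx => by simp [hx], if_pos rfl, mul_comm]

lemma walsh_pow_three (F : V n → V n) (u v : V n) :
    walsh F u v ^ 3 = ∑ t : V n × V n × V n,
      chi (v ⬝ᵥ (F t.1 + F t.2.1 + F t.2.2)) * chi (u ⬝ᵥ (t.1 + t.2.1 + t.2.2)) := by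
  simp only [walsh_eq_sum, Fintype.sum_prod_type, dotProduct_add, chi_add]
  rw [pow_succ, sq, sum_mul_sum, sum_mul]
  refine sum_congr rfl fun x _ => ?_
  rw [sum_mul]
  refine sum_congr rfl fun y _ => ?_
  rw [mul_sum]
  exact sum_congr rfl fun z _ => by ring

lemma sq_two_pow_mul_tripleCount (F : V n → V n) (a b : V n) :
    (2 ^ n) ^ 2 * (tripleCount F a b : ℤ) =
      ∑ v, ∑ u, walsh F u v ^ 3 * (chi (u ⬝ᵥ a) * chi (v ⬝ᵥ b)) := by
  symm
  calc ∑ v, ∑ u, walsh F u v ^ 3 * (chi (u ⬝ᵥ a) * chi (v ⬝ᵥ b))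
      = ∑ t : V n × V n × V n, (∑ v : V n, chi (v ⬝ᵥ (F t.1 + F t.2.1 + F t.2.2 + b))) *
          ∑ u : V n, chi (u ⬝ᵥ (t.1 + t.2.1 + t.2.2 + a)) := by
        simp only [walsh_pow_three, sum_mul, mul_sum]
        refine ((sum_congr rfl fun _ _ => sum_comm).trans sum_comm).trans
          (sum_congr rfl fun _ _ => ?_)
        rw [sum_comm]
        refine sum_congr rfl fun _ _ => sum_congr rfl fun _ _ => ?_
        simp only [dotProduct_add, chi_add]
        ring
    _ = ∑ t : V n × V n × V n,
          if t.1 + t.2.1 + t.2.2 = a ∧ F t.1 + F t.2.1 + F t.2.2 = b then (2 ^ n) ^ 2 else 0 := by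
        simp only [sum_chi_dotProduct, add_eq_zero_iff_eq_neg, ZModModule.neg_eq_self]
        refine sum_congr rfl fun t _ => ?_
        split_ifs <;> simp_all [sq]
    _ = (2 ^ n) ^ 2 * (tripleCount F a b : ℤ) := by
        rw [sum_ite, sum_const_zero, add_zero, sum_const, nsmul_eq_mul, mul_comm, tripleCount]

lemma two_pow_mul_tripleCount_of_plateaued (F : V n → V n) (lam : V n → ℤ)
    (hlam : ∀ v u, walsh F u v = 0 ∨ walsh F u v = lam v ∨ walsh F u v = -lam v) (a b : V n) :
    2 ^ n * (tripleCount F a b : ℤ) = ∑ v, lam v ^ 2 * chi (v ⬝ᵥ (F a + b)) := by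
  have hcube : ∀ v u, walsh F u v ^ 3 = lam v ^ 2 * walsh F u v := by
    intro v u
    rcases hlam v u with h | h | h <;> rw [h] <;> ring
  apply mul_left_cancel₀ (pow_ne_zero n two_ne_zero : (2 : ℤ) ^ n ≠ 0)
  calc 2 ^ n * (2 ^ n * (tripleCount F a b : ℤ))
      = ∑ v, ∑ u, walsh F u v ^ 3 * (chi (u ⬝ᵥ a) * chi (v ⬝ᵥ b)) := by
        rw [← sq_two_pow_mul_tripleCount]
        ring
    _ = ∑ v, lam v ^ 2 * chi (v ⬝ᵥ b) * ∑ u, walsh F u v * chi (u ⬝ᵥ a) := by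
        refine sum_congr rfl fun v _ => ?_
        rw [mul_sum]
        exact sum_congr rfl fun u _ => by rw [hcube]; ring
    _ = 2 ^ n * ∑ v, lam v ^ 2 * chi (v ⬝ᵥ (F a + b)) := by
        rw [mul_sum]
        refine sum_congr rfl fun v _ => ?_
        rw [sum_walsh_mul_chi, dotProduct_add, chi_add]
        ring

lemma tripleCount_eq_of_add_eq (F : V n → V n) (lam : V n → ℤ)
    (hlam : ∀ v u, walsh F u v = 0 ∨ walsh F u v = lam v ∨ walsh F u v = -lam v)
    {a b a' b' : V n} (h : F a + b = F a' + b') :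
    tripleCount F a b = tripleCount F a' b' := by
  have h2n := (two_pow_mul_tripleCount_of_plateaued F lam hlam a b).trans
    (h ▸ (two_pow_mul_tripleCount_of_plateaued F lam hlam a' b').symm)
  exact_mod_cast mul_left_cancel₀ (by positivity) h2n

end Fourier

theorem plateaued_unbalanced_uniform_exclude_general (n : ℕ) (F : V n → V n)
    (hplateaued : ∀ v : V n, ∃ lam : ℤ, 0 ≤ lam ∧
      ∀ u : V n, walsh F u v = 0 ∨ walsh F u v = lam ∨ walsh F u v = -lam)
    (a α b : V n) (hb : b ≠ F a) :
    excMult (graphF F) (a, b) = excMult (graphF F) (α, b + F a + F α) := by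
  choose lam _ hlam using hplateaued
  have hb' : b + F a + F α ≠ F α := by
    rwa [Ne, add_eq_right, add_eq_zero_iff_eq_neg, ZModModule.neg_eq_self]
  have hsum : F a + b = F α + (b + F a + F α) := by
    linear_combination -ZModModule.add_self (F α)
  apply mul_left_cancel₀ (by norm_num : (6 : ℕ) ≠ 0)
  rw [six_mul_excMult_graphF F hb, six_mul_excMult_graphF F hb',
    tripleCount_eq_of_add_eq F lam hlam hsum]

/-- Let `F : 𝔽₂ⁿ → 𝔽₂ⁿ` be an APN plateaued function all of whose component
functions are unbalanced. Then for all `a, α, b` with `b ≠ F a`,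
`d_{G_F}(a, b) = d_{G_F}(α, b + F a + F α)`; i.e., `d_{G_F}` is uniform on the partition
`{Q_a(F) : a ∈ 𝔽₂ⁿ}` of the complement of the graph, where `Q_a(F) = {a} × (𝔽₂ⁿ ∖ {F a})`. -/
theorem plateaued_unbalanced_uniform_exclude (n : ℕ) (F : V n → V n) (hF : IsAPN F)
    (hplateaued : ∀ v : V n, ∃ lam : ℤ, 0 ≤ lam ∧
      ∀ u : V n, walsh F u v = 0 ∨ walsh F u v = lam ∨ walsh F u v = -lam)
    (hunbalanced : ∀ v : V n, v ≠ 0 → walsh F 0 v ≠ 0)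
    (a α b : V n) (hb : b ≠ F a) :
    excMult (graphF F) (a, b) = excMult (graphF F) (α, b + F a + F α) :=
  plateaued_unbalanced_uniform_exclude_general n F hplateaued a α b hb
end
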